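/- arXiv:2105.02375 — 4 statements merged into one kernel-verified Lean document; each statement's English description precedes it below -/
import Mathlib

section
/- Let z ∈ ℝ^K with K ≥ 2, let k ∈ [K], and define the cross-entropy loss L(z, y_k) = log( (Σ_{i=1}^K exp(z_i)) / exp(z_k) ). Then for any c₁ > 0, L(z, y_k) ≥ (1/(1+c₁))·( (Σ_{i=1}^K z_i − K·z_k)/(K−1) ) + c₂, where c₂ = (1/(1+c₁))·log((1+c₁)(K−1)) + (c₁/(1+c₁))·log((1+c₁)/c₁). -/
/-!
Write the loss as `log (1 + T)` with `T = ∑_{i ≠ k} exp (z i - z k)`. Concavity of `log` at the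
two points `(1 + c₁) T` and `(1 + c₁) / c₁`, with weights `1 / (1 + c₁)` and `c₁ / (1 + c₁)`, gives
`log (1 + T) ≥ (1/(1+c₁)) log ((1 + c₁) T) + (c₁/(1+c₁)) log ((1 + c₁)/c₁)`, and Jensen for `exp`
bounds `log T` below by `log (K - 1)` plus the mean of the `K - 1` differences `z i - z k`.
-/

open Finset Real

theorem Real.log_card_add_mean_le_log_sum_exp {ι : Type*} (s : Finset ι) (hs : s.Nonempty)
    (a : ι → ℝ) : log #s + (∑ i ∈ s, a i) / #s ≤ log (∑ i ∈ s, exp (a i)) := by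
  have hcard : (0 : ℝ) < #s := by exact_mod_cast hs.card_pos
  have jensen : exp (∑ i ∈ s, (#s : ℝ)⁻¹ • a i) ≤ ∑ i ∈ s, (#s : ℝ)⁻¹ • exp (a i) :=
    convexOn_exp.map_sum_le (fun _ _ => by positivity)
      (by rw [sum_const, nsmul_eq_mul, mul_inv_cancel₀ hcard.ne']) (fun _ _ => Set.mem_univ _)
  simp only [smul_eq_mul, ← mul_sum] at jensen
  have hlog := log_le_log (exp_pos _) jensen
  rw [log_exp, log_mul (inv_ne_zero hcard.ne') (by positivity), log_inv] at hlog
  rw [div_eq_inv_mul]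
  linarith

theorem Real.weighted_log_le_log_one_add {c x : ℝ} (hc : 0 < c) (hx : 0 < x) :
    1 / (1 + c) * log ((1 + c) * x) + c / (1 + c) * log ((1 + c) / c) ≤ log (1 + x) := by
  have hpoint : 1 / (1 + c) * ((1 + c) * x) + c / (1 + c) * ((1 + c) / c) = 1 + x := by
    field_simp
    ring
  have hconcave := strictConcaveOn_log_Ioi.concaveOn.2
    (Set.mem_Ioi.2 (by positivity : 0 < (1 + c) * x)) (Set.mem_Ioi.2 (by positivity : 0 < (1 + c) / c))
    (by positivity : 0 ≤ 1 / (1 + c)) (by positivity : 0 ≤ c / (1 + c)) (by field_simp)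
  simpa only [smul_eq_mul, hpoint] using hconcave

theorem Real.sum_exp_div_exp_eq_one_add {ι : Type*} [Fintype ι] [DecidableEq ι] (z : ι → ℝ)
    (k : ι) : (∑ i, exp (z i)) / exp (z k) = 1 + ∑ i ∈ univ.erase k, exp (z i - z k) := by
  simp only [sum_div, ← exp_sub]
  rw [← add_sum_erase _ _ (mem_univ k), sub_self, exp_zero]

/-- Lower bound on the cross-entropy loss `L(z, y_k) = log((∑ᵢ exp zᵢ)/exp z_k)`:
for any `c₁ > 0`,
`L(z, y_k) ≥ (1/(1+c₁))·((∑ᵢ zᵢ − K z_k)/(K−1)) + c₂`, where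
`c₂ = (1/(1+c₁)) log((1+c₁)(K−1)) + (c₁/(1+c₁)) log((1+c₁)/c₁)`. -/
theorem stmt6 {K : ℕ} (hK : 2 ≤ K) (z : Fin K → ℝ) (k : Fin K) (c₁ : ℝ) (hc₁ : 0 < c₁) :
    Real.log ((∑ i, Real.exp (z i)) / Real.exp (z k)) ≥
      (1 / (1 + c₁)) * (((∑ i, z i) - (K : ℝ) * z k) / ((K : ℝ) - 1)) +
        ((1 / (1 + c₁)) * Real.log ((1 + c₁) * ((K : ℝ) - 1)) +
          (c₁ / (1 + c₁)) * Real.log ((1 + c₁) / c₁)) := by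
  set s := univ.erase k
  have hcard_nat : #s = K - 1 := by
    rw [card_erase_of_mem (mem_univ k), card_univ, Fintype.card_fin]
  have hcard : (#s : ℝ) = K - 1 := by rw [hcard_nat, Nat.cast_pred (by omega)]
  have hs : s.Nonempty := card_pos.1 (by omega)
  have hK1 : (0 : ℝ) < K - 1 := hcard ▸ Nat.cast_pos.2 hs.card_pos
  have hsum : ∑ i ∈ s, (z i - z k) = (∑ i, z i) - K * z k := by
    rw [sum_sub_distrib, sum_const, nsmul_eq_mul, hcard, sum_erase_eq_sub (mem_univ k)]
    ring
  have hT : 0 < ∑ i ∈ s, exp (z i - z k) := sum_pos (fun _ _ => exp_pos _) hs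
  have hjensen := log_card_add_mean_le_log_sum_exp s hs (fun i => z i - z k)
  rw [hcard, hsum] at hjensen
  have hc1 : 0 < 1 + c₁ := by linarith
  rw [sum_exp_div_exp_eq_one_add, ge_iff_le]
  refine le_trans ?_ (weighted_log_le_log_one_add hc₁ hT)
  rw [log_mul hc1.ne' hK1.ne', log_mul hc1.ne' hT.ne']
  have hscaled := mul_le_mul_of_nonneg_left hjensen (by positivity : (0 : ℝ) ≤ 1 / (1 + c₁))
  linarith
end

section
/- Let g : ℝ^{K×N} → ℝ be differentiable and let f(W, H, b) = g(W·H + b·1ᵀ) + (λ_W/2)‖W‖_F² + (λ_H/2)‖H‖_F² + (λ_b/2)‖b‖₂² with λ_W, λ_H > 0. Then any critical point (W, H, b) of f satisfies λ_W·Wᵀ·W = λ_H·H·Hᵀ, and consequently λ_W·‖W‖_F² = λ_H·‖H‖_F². -/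
/-! Multiplying the first critical-point equation by `Wᵀ` on the left and the second by `Hᵀ` on
the right gives two expressions for `Wᵀ G Hᵀ`, namely `-λ_W WᵀW` and `-λ_H HHᵀ`. Taking traces
turns this balance into the one between squared Frobenius norms. -/

open Matrix

attribute [local instance] Matrix.normedAddCommGroup Matrix.normedSpace

def frobSq {m n : ℕ} (A : Matrix (Fin m) (Fin n) ℝ) : ℝ := ∑ i, ∑ j, (A i j) ^ 2

namespace Matrix

theorem smul_transpose_mul_self_eq_smul_mul_transpose_self {R m n p : Type*} [CommRing R]
    [Fintype m] [Fintype n] [Fintype p] {a c : R} {W : Matrix m n R} {H : Matrix n p R}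
    {G : Matrix m p R} (hW : G * Hᵀ + a • W = 0) (hH : Wᵀ * G + c • H = 0) :
    a • (Wᵀ * W) = c • (H * Hᵀ) := by
  have hGH : G * Hᵀ = -(a • W) := eq_neg_of_add_eq_zero_left hW
  have hWG : Wᵀ * G = -(c • H) := eq_neg_of_add_eq_zero_left hH
  have hassoc : Wᵀ * (G * Hᵀ) = (Wᵀ * G) * Hᵀ := (Matrix.mul_assoc _ _ _).symm
  rw [hGH, hWG, Matrix.mul_neg, Matrix.neg_mul, Matrix.mul_smul, Matrix.smul_mul] at hassoc
  exact neg_inj.mp hassoc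

end Matrix

theorem frobSq_eq_trace_transpose_mul_self {m n : ℕ} (A : Matrix (Fin m) (Fin n) ℝ) :
    frobSq A = (Aᵀ * A).trace := by
  simp only [frobSq, trace, diag, mul_apply, transpose_apply, sq]
  exact Finset.sum_comm

theorem frobSq_eq_trace_mul_transpose_self {m n : ℕ} (A : Matrix (Fin m) (Fin n) ℝ) :
    frobSq A = (A * Aᵀ).trace := by
  rw [frobSq_eq_trace_transpose_mul_self, trace_mul_comm]

theorem stmt9_general {K d N : ℕ} (lW lH : ℝ)
    (W : Matrix (Fin K) (Fin d) ℝ) (H : Matrix (Fin d) (Fin N) ℝ)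
    (G : Matrix (Fin K) (Fin N) ℝ)
    (hcrit1 : G * Hᵀ + lW • W = 0)
    (hcrit2 : Wᵀ * G + lH • H = 0) :
    lW • (Wᵀ * W) = lH • (H * Hᵀ) ∧ lW * frobSq W = lH * frobSq H := by
  have hbalance := smul_transpose_mul_self_eq_smul_mul_transpose_self hcrit1 hcrit2
  refine ⟨hbalance, ?_⟩
  have htrace := congrArg trace hbalance
  rwa [trace_smul, trace_smul, ← frobSq_eq_trace_transpose_mul_self,
    ← frobSq_eq_trace_mul_transpose_self] at htrace

/-- Any critical point `(W, H, b)` of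
`f(W,H,b) = g(WH + b·1ᵀ) + (λ_W/2)‖W‖_F² + (λ_H/2)‖H‖_F² + (λ_b/2)‖b‖₂²`
(with `g` differentiable, `λ_W, λ_H > 0`) satisfies `λ_W WᵀW = λ_H HHᵀ`, and consequently
`λ_W ‖W‖_F² = λ_H ‖H‖_F²`. Here `G` is the gradient of `g` at `WH + b·1ᵀ`, and the
critical-point conditions are `G·Hᵀ + λ_W W = 0`, `Wᵀ·G + λ_H H = 0`, and
`∑ⱼ Gⱼ + λ_b b = 0` (column sums). -/
theorem stmt9 {K d N : ℕ} (g : Matrix (Fin K) (Fin N) ℝ → ℝ) (hg : Differentiable ℝ g)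
    (lW lH lb : ℝ) (hlW : 0 < lW) (hlH : 0 < lH) (hlb : 0 < lb)
    (W : Matrix (Fin K) (Fin d) ℝ) (H : Matrix (Fin d) (Fin N) ℝ) (b : Fin K → ℝ)
    (G : Matrix (Fin K) (Fin N) ℝ)
    (hG : ∀ i j, G i j =
      fderiv ℝ g (W * H + Matrix.of fun i' _ => b i') (Matrix.single i j 1))
    (hcrit1 : G * Hᵀ + lW • W = 0)
    (hcrit2 : Wᵀ * G + lH • H = 0)
    (hcrit3 : ∀ k, (∑ j, G k j) + lb * b k = 0) :
    lW • (Wᵀ * W) = lH • (H * Hᵀ) ∧ lW * frobSq W = lH * frobSq H :=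
  stmt9_general lW lH W H G hcrit1 hcrit2
end

section
/- Let g : ℝ^{K×N} → ℝ be convex and differentiable, λ_W, λ_H, λ_b > 0, and define f(W,H,b) = g(WH + b1ᵀ) + (λ_W/2)‖W‖_F² + (λ_H/2)‖H‖_F² + (λ_b/2)‖b‖₂² and f̃(Z,b) = g(Z + b·1ᵀ) + √(λ_W·λ_H)·‖Z‖_* + (λ_b/2)‖b‖₂². If (Z*, b*) is a global minimizer of f̃, then f̃(Z*, b*) ≤ f(W, H, b) for all W ∈ ℝ^{K×d}, H ∈ ℝ^{d×N}, b ∈ ℝ^K. -/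
open Matrix

attribute [local instance] Matrix.normedAddCommGroup Matrix.normedSpace

/-- The nuclear norm of a real matrix: the sum of its singular values. -/
noncomputable def nuclearNorm {K N : ℕ} (Z : Matrix (Fin K) (Fin N) ℝ) : ℝ :=
  ∑ i, Real.sqrt ((show (Zᵀ * Z).IsHermitian by
    simpa [Matrix.conjTranspose_eq_transpose_of_trivial] using
      Matrix.isHermitian_conjTranspose_mul_self Z).eigenvalues i)

/-- The convex objective `f̃(Z,b) = g(Z + b·1ᵀ) + √(λ_W λ_H)‖Z‖_* + (λ_b/2)‖b‖₂²`. -/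
noncomputable def ftilde {K N : ℕ} (g : Matrix (Fin K) (Fin N) ℝ → ℝ) (lW lH lb : ℝ)
    (Z : Matrix (Fin K) (Fin N) ℝ) (b : Fin K → ℝ) : ℝ :=
  g (Z + Matrix.of fun i _ => b i) + Real.sqrt (lW * lH) * nuclearNorm Z +
    lb / 2 * ∑ i, (b i) ^ 2

/-! Put `Z = W H` in the minimality of `(Z*, b*)`: it remains to show
`√(λ_W λ_H) ‖W H‖_* ≤ (λ_W/2) ‖W‖_F² + (λ_H/2) ‖H‖_F²`, which by AM-GM follows from
`‖W H‖_* ≤ ‖W‖_F ‖H‖_F`. If `v_j` is an orthonormal basis of right singular vectors of `W H`, then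
`‖W H‖_* = ∑ ‖W x_j‖` with `x_j = H v_j` and the `W x_j` pairwise orthogonal. Write
`‖W x_j‖ = ⟪u_j, W x_j⟫` with `u_j = ‖W x_j‖⁻¹ W x_j` (zero when `W x_j = 0`) and expand `x_j` in the
standard basis `e_k`; Cauchy–Schwarz bounds the sum by `√(∑ ‖x_j‖²) · √(∑_{j,k} ⟪u_j, W e_k⟫²)`.
The first factor is `‖H‖_F` because the `v_j` are orthonormal, and Bessel's inequality for the
nonzero `u_j`, which are orthonormal, bounds the second by `‖W‖_F`. -/

open scoped RealInnerProductSpace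

section InnerProductSpace

variable {ι κ E F : Type*} [Fintype ι] [Fintype κ] [NormedAddCommGroup E] [InnerProductSpace ℝ E]
  [NormedAddCommGroup F] [InnerProductSpace ℝ F]

theorem sum_sq_inner_inv_norm_smul_le {y : ι → F} (hy : Pairwise fun i j => ⟪y i, y j⟫ = 0)
    (z : F) : ∑ j, ⟪‖y j‖⁻¹ • y j, z⟫ ^ 2 ≤ ‖z‖ ^ 2 := by
  classical
  have hu : Orthonormal ℝ fun j : {j // y j ≠ 0} => ‖y j‖⁻¹ • y j := by
    rw [orthonormal_iff_ite]
    rintro ⟨i, hi⟩ ⟨j, hj⟩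
    rcases eq_or_ne i j with rfl | hij
    · rw [if_pos rfl, real_inner_self_eq_norm_sq, norm_smul, norm_inv, norm_norm,
        inv_mul_cancel₀ (norm_ne_zero_iff.mpr hi), one_pow]
    · simp [real_inner_smul_left, real_inner_smul_right, hy hij, hij]
  calc ∑ j, ⟪‖y j‖⁻¹ • y j, z⟫ ^ 2
      = ∑ j ∈ Finset.univ with y j ≠ 0, ⟪‖y j‖⁻¹ • y j, z⟫ ^ 2 := by
        refine (Finset.sum_filter_of_ne ?_).symm
        rintro j - hj hj0
        simp [hj0] at hj
    _ = ∑ j : {j // y j ≠ 0}, ⟪‖y j‖⁻¹ • y j, z⟫ ^ 2 := Finset.sum_subtype _ (fun j => by simp) _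
    _ ≤ ‖z‖ ^ 2 := by simpa only [Real.norm_eq_abs, sq_abs] using hu.sum_inner_products_le z

theorem sum_norm_le_of_pairwise_inner_eq_zero (T : E →ₗ[ℝ] F) (b : OrthonormalBasis κ ℝ E)
    {x : ι → E} (hx : Pairwise fun i j => ⟪T (x i), T (x j)⟫ = 0) :
    ∑ j, ‖T (x j)‖ ≤ √(∑ k, ‖T (b k)‖ ^ 2) * √(∑ j, ‖x j‖ ^ 2) := by
  set u : ι → F := fun j => ‖T (x j)‖⁻¹ • T (x j)
  have hnorm : ∀ j, ‖T (x j)‖ = ∑ k, ⟪b k, x j⟫ * ⟪u j, T (b k)⟫ := by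
    intro j
    calc ‖T (x j)‖ = ⟪u j, T (x j)⟫ := by
          rw [real_inner_smul_left, real_inner_self_eq_norm_sq]
          rcases eq_or_ne ‖T (x j)‖ 0 with h | h
          · simp [h]
          · field_simp
      _ = ⟪u j, T (∑ k, ⟪b k, x j⟫ • b k)⟫ := by rw [b.sum_repr']
      _ = ∑ k, ⟪b k, x j⟫ * ⟪u j, T (b k)⟫ := by
          simp only [map_sum, map_smul, inner_sum, real_inner_smul_right]
  have hx_sq : ∑ p : ι × κ, ⟪b p.2, x p.1⟫ ^ 2 = ∑ j, ‖x j‖ ^ 2 := by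
    simp_rw [Fintype.sum_prod_type, b.sum_sq_inner_right]
  have hu_sq : ∑ p : ι × κ, ⟪u p.1, T (b p.2)⟫ ^ 2 ≤ ∑ k, ‖T (b k)‖ ^ 2 := by
    rw [Fintype.sum_prod_type_right]
    exact Finset.sum_le_sum fun k _ => sum_sq_inner_inv_norm_smul_le hx (T (b k))
  calc ∑ j, ‖T (x j)‖ = ∑ p : ι × κ, ⟪b p.2, x p.1⟫ * ⟪u p.1, T (b p.2)⟫ := by
        rw [Fintype.sum_prod_type]; exact Finset.sum_congr rfl fun j _ => hnorm j
    _ ≤ √(∑ p : ι × κ, ⟪b p.2, x p.1⟫ ^ 2) * √(∑ p : ι × κ, ⟪u p.1, T (b p.2)⟫ ^ 2) :=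
        Real.sum_mul_le_sqrt_mul_sqrt _ _ _
    _ ≤ √(∑ k, ‖T (b k)‖ ^ 2) * √(∑ j, ‖x j‖ ^ 2) := by
        rw [hx_sq, mul_comm]
        exact mul_le_mul_of_nonneg_right (Real.sqrt_le_sqrt hu_sq) (Real.sqrt_nonneg _)

end InnerProductSpace

theorem inner_toEuclideanLin_eigenvectorBasis {m n : Type*} [Fintype m] [Fintype n]
    [DecidableEq m] [DecidableEq n] (Z : Matrix m n ℝ) (hA : (Zᵀ * Z).IsHermitian)
    (i j : n) :
    ⟪toEuclideanLin Z (hA.eigenvectorBasis i), toEuclideanLin Z (hA.eigenvectorBasis j)⟫ =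
      if i = j then hA.eigenvalues j else 0 := by
  have hZZ : toEuclideanLin (Zᵀ * Z) (hA.eigenvectorBasis j) =
      hA.eigenvalues j • hA.eigenvectorBasis j := by
    rw [toLpLin_apply, hA.mulVec_eigenvectorBasis]; rfl
  rw [← LinearMap.adjoint_inner_right, ← toEuclideanLin_conjTranspose_eq_adjoint,
    conjTranspose_eq_transpose_of_trivial, ← LinearMap.comp_apply, ← toLpLin_mul_same, hZZ,
    real_inner_smul_right, orthonormal_iff_ite.mp hA.eigenvectorBasis.orthonormal]
  split_ifs <;> simp

theorem exists_orthonormalBasis_nuclearNorm_eq {K N : ℕ} (Z : Matrix (Fin K) (Fin N) ℝ) :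
    ∃ v : OrthonormalBasis (Fin N) ℝ (EuclideanSpace ℝ (Fin N)),
      nuclearNorm Z = ∑ j, ‖toEuclideanLin Z (v j)‖ ∧
        Pairwise fun i j => ⟪toEuclideanLin Z (v i), toEuclideanLin Z (v j)⟫ = 0 := by
  have hA : (Zᵀ * Z).IsHermitian := by
    simpa [conjTranspose_eq_transpose_of_trivial] using isHermitian_conjTranspose_mul_self Z
  refine ⟨hA.eigenvectorBasis, Finset.sum_congr rfl fun j _ => ?_, fun i j hij =>
    (inner_toEuclideanLin_eigenvectorBasis Z hA i j).trans (if_neg hij)⟩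
  rw [norm_eq_sqrt_real_inner, inner_toEuclideanLin_eigenvectorBasis, if_pos rfl]

theorem frobSq_nonneg {m n : ℕ} (A : Matrix (Fin m) (Fin n) ℝ) : 0 ≤ frobSq A := by
  unfold frobSq
  positivity

theorem sum_norm_sq_toEuclideanLin {ι : Type*} [Fintype ι] {m n : ℕ}
    (A : Matrix (Fin m) (Fin n) ℝ) (v : OrthonormalBasis ι ℝ (EuclideanSpace ℝ (Fin n))) :
    ∑ j, ‖toEuclideanLin A (v j)‖ ^ 2 = frobSq A := by
  have hrow : ∀ j i, toEuclideanLin A (v j) i = ⟪v j, WithLp.toLp 2 (A i)⟫ := by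
    intro j i
    simp [toLpLin_apply, mulVec, dotProduct, PiLp.inner_apply]
  simp_rw [EuclideanSpace.norm_sq_eq, Real.norm_eq_abs, sq_abs, hrow]
  rw [Finset.sum_comm]
  simp_rw [v.sum_sq_inner_right, EuclideanSpace.norm_sq_eq, Real.norm_eq_abs, sq_abs]
  rfl

theorem nuclearNorm_mul_le {K N d : ℕ} (W : Matrix (Fin K) (Fin d) ℝ)
    (H : Matrix (Fin d) (Fin N) ℝ) : nuclearNorm (W * H) ≤ √(frobSq W) * √(frobSq H) := by
  obtain ⟨v, hnuc, horth⟩ := exists_orthonormalBasis_nuclearNorm_eq (W * H)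
  simp only [toLpLin_mul_same, LinearMap.comp_apply] at hnuc horth
  rw [hnuc, ← sum_norm_sq_toEuclideanLin W (EuclideanSpace.basisFun _ ℝ),
    ← sum_norm_sq_toEuclideanLin H v]
  exact sum_norm_le_of_pairwise_inner_eq_zero _ _ horth

theorem sqrt_mul_mul_sqrt_mul_sqrt_le {p q a b : ℝ} (hp : 0 ≤ p) (hq : 0 ≤ q) (ha : 0 ≤ a)
    (hb : 0 ≤ b) : √(p * q) * (√a * √b) ≤ p / 2 * a + q / 2 * b := by
  have h := two_mul_le_add_sq √(p * a) √(q * b)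
  rw [Real.sq_sqrt (mul_nonneg hp ha), Real.sq_sqrt (mul_nonneg hq hb), Real.sqrt_mul hp,
    Real.sqrt_mul hq] at h
  rw [Real.sqrt_mul hp]
  linarith

theorem stmt11_general {K N : ℕ} (g : Matrix (Fin K) (Fin N) ℝ → ℝ)
    (lW lH lb : ℝ) (hlW : 0 < lW) (hlH : 0 < lH)
    (Zstar : Matrix (Fin K) (Fin N) ℝ) (bstar : Fin K → ℝ)
    (hmin : ∀ (Z : Matrix (Fin K) (Fin N) ℝ) (b : Fin K → ℝ),
      ftilde g lW lH lb Zstar bstar ≤ ftilde g lW lH lb Z b) :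
    ∀ (d : ℕ) (W : Matrix (Fin K) (Fin d) ℝ) (H : Matrix (Fin d) (Fin N) ℝ) (b : Fin K → ℝ),
      ftilde g lW lH lb Zstar bstar ≤
        g (W * H + Matrix.of fun i _ => b i) + lW / 2 * frobSq W + lH / 2 * frobSq H +
          lb / 2 * ∑ i, (b i) ^ 2 := by
  intro d W H b
  have hreg : √(lW * lH) * nuclearNorm (W * H) ≤ lW / 2 * frobSq W + lH / 2 * frobSq H :=
    (mul_le_mul_of_nonneg_left (nuclearNorm_mul_le W H) (Real.sqrt_nonneg _)).trans
      (sqrt_mul_mul_sqrt_mul_sqrt_le hlW.le hlH.le (frobSq_nonneg W) (frobSq_nonneg H))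
  calc ftilde g lW lH lb Zstar bstar ≤ ftilde g lW lH lb (W * H) b := hmin (W * H) b
    _ ≤ _ := by unfold ftilde; linarith

/-- If `(Z*, b*)` is a global minimizer of `f̃`, then `f̃(Z*, b*)` lower bounds the
nonconvex objective `f(W,H,b) = g(WH + b·1ᵀ) + (λ_W/2)‖W‖_F² + (λ_H/2)‖H‖_F²
+ (λ_b/2)‖b‖₂²` for all `W, H, b` (any inner dimension `d`). -/
theorem stmt11 {K N : ℕ} (g : Matrix (Fin K) (Fin N) ℝ → ℝ)
    (hgconv : ConvexOn ℝ Set.univ g) (hgdiff : Differentiable ℝ g)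
    (lW lH lb : ℝ) (hlW : 0 < lW) (hlH : 0 < lH) (hlb : 0 < lb)
    (Zstar : Matrix (Fin K) (Fin N) ℝ) (bstar : Fin K → ℝ)
    (hmin : ∀ (Z : Matrix (Fin K) (Fin N) ℝ) (b : Fin K → ℝ),
      ftilde g lW lH lb Zstar bstar ≤ ftilde g lW lH lb Z b) :
    ∀ (d : ℕ) (W : Matrix (Fin K) (Fin d) ℝ) (H : Matrix (Fin d) (Fin N) ℝ) (b : Fin K → ℝ),
      ftilde g lW lH lb Zstar bstar ≤
        g (W * H + Matrix.of fun i _ => b i) + lW / 2 * frobSq W + lH / 2 * frobSq H +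
          lb / 2 * ∑ i, (b i) ^ 2 :=
  stmt11_general g lW lH lb hlW hlH Zstar bstar hmin
end

section
/- Let g : ℝ^{K×N} → ℝ be twice differentiable, λ_W, λ_H, λ_b > 0, d > K, and f(W,H,b) = g(WH + b1ᵀ) + (λ_W/2)‖W‖_F² + (λ_H/2)‖H‖_F² + (λ_b/2)‖b‖₂². Suppose (W, H, b) is a critical point of f with operator norm ‖∇g(WH + b1ᵀ)‖ > √(λ_W·λ_H). Then there exists a direction Δ = (Δ_W, Δ_H, 0) along which the Hessian quadratic form of f is strictly negative: ∇²f(W,H,b)[Δ,Δ] < 0. -/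
/-!
At a critical point, multiplying the two critical-point equations gives the balance
`λ_H HHᵀ = λ_W WᵀW`, so every `a ∈ ker W` also satisfies `Hᵀa = 0`, and `ker W ≠ 0`
because `d > K`. For the rank-one direction `Δ_W = y aᵀ`, `Δ_H = a wᵀ` the first-order
change `WΔ_H + Δ_W H` of the product vanishes, so the `∇²g` term drops out. Taking
`y = Gv` and `w = -λ_W v` leaves `λ_W |a|² (λ_W λ_H |v|² - |Gv|²)`, which is negative
once `v` nearly attains the operator norm of `G`.
-/

open Matrix

attribute [local instance] Matrix.normedAddCommGroup Matrix.normedSpace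

/-- The ℓ₂ operator norm of a matrix. -/
noncomputable def matOpNorm {K N : ℕ} (G : Matrix (Fin K) (Fin N) ℝ) : ℝ :=
  ‖LinearMap.toContinuousLinearMap (Matrix.toEuclideanLin G)‖

namespace Matrix

variable {l m n : Type*} [Fintype m] [Fintype n]

theorem exists_ne_zero_mulVec_eq_zero_of_card_lt {R : Type*} [Field R] (W : Matrix m n R)
    (h : Fintype.card m < Fintype.card n) : ∃ a ≠ 0, W *ᵥ a = 0 := by
  obtain ⟨a, ha, ha0⟩ := (Submodule.ne_bot_iff _).mp
    (LinearMap.ker_ne_bot_of_finrank_lt (f := W.mulVecLin) (by simpa using h))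
  exact ⟨a, ha0, ha⟩

theorem smul_mul_transpose_eq_smul_transpose_mul [Fintype l] {R : Type*} [CommRing R]
    {W : Matrix m l R} {H : Matrix l n R} {G : Matrix m n R} {lW lH : R}
    (hW : G * Hᵀ + lW • W = 0) (hH : Wᵀ * G + lH • H = 0) :
    lH • (H * Hᵀ) = lW • (Wᵀ * W) := by
  have h := Matrix.mul_assoc Wᵀ G Hᵀ
  rw [eq_neg_of_add_eq_zero_left hW, eq_neg_of_add_eq_zero_left hH] at h
  simpa [Matrix.mul_smul, Matrix.smul_mul] using h

theorem vecMul_eq_zero_of_smul_mul_transpose_eq [Fintype l] {R : Type*} [CommRing R]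
    [LinearOrder R] [IsStrictOrderedRing R] {W : Matrix m l R} {H : Matrix l n R} {lW lH : R}
    (hlH : lH ≠ 0) (hbal : lH • (H * Hᵀ) = lW • (Wᵀ * W)) {a : l → R} (hWa : W *ᵥ a = 0) :
    a ᵥ* H = 0 := by
  have h := congrArg (fun M => a ⬝ᵥ M *ᵥ a) hbal
  simp only [smul_mulVec, dotProduct_smul, ← mulVec_mulVec, hWa, mulVec_zero,
    dotProduct_zero, smul_zero, dotProduct_mulVec a H, mulVec_transpose, smul_eq_mul] at h
  simpa [hlH] using h

theorem sum_sum_mul_vecMulVec {R : Type*} [CommSemiring R] (G : Matrix m n R) (x : m → R)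
    (z : n → R) : ∑ i, ∑ j, G i j * vecMulVec x z i j = x ⬝ᵥ G *ᵥ z := by
  simp only [vecMulVec_apply, dotProduct, mulVec, Finset.mul_sum]
  exact Finset.sum_congr rfl fun i _ => Finset.sum_congr rfl fun j _ => by ring

end Matrix

theorem frobSq_vecMulVec {m n : ℕ} (x : Fin m → ℝ) (z : Fin n → ℝ) :
    frobSq (vecMulVec x z) = (x ⬝ᵥ x) * (z ⬝ᵥ z) := by
  simp only [frobSq, vecMulVec_apply, dotProduct, Finset.sum_mul_sum]
  exact Finset.sum_congr rfl fun i _ => Finset.sum_congr rfl fun j _ => by ring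

theorem exists_sq_mul_dotProduct_lt_of_lt_matOpNorm {K N : ℕ} (G : Matrix (Fin K) (Fin N) ℝ)
    {c : ℝ} (hc : 0 ≤ c) (h : c < matOpNorm G) :
    ∃ v : Fin N → ℝ, c ^ 2 * (v ⬝ᵥ v) < G *ᵥ v ⬝ᵥ G *ᵥ v := by
  obtain ⟨x, hx1, hx⟩ := ContinuousLinearMap.exists_lt_apply_of_lt_opNorm _ h
  refine ⟨WithLp.ofLp x, ?_⟩
  have hsq : (c * ‖x‖) ^ 2 < ‖toEuclideanLin G x‖ ^ 2 := by
    gcongr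
    calc c * ‖x‖ ≤ c := mul_le_of_le_one_right hc hx1.le
      _ < _ := hx
  rw [mul_pow, EuclideanSpace.real_norm_sq_eq, EuclideanSpace.real_norm_sq_eq] at hsq
  simpa [dotProduct, sq] using hsq

/-- `G` stands for `∇g(WH + b1ᵀ)` and `B` for `∇²g(WH + b1ᵀ)`; `hcrit1` and `hcrit2` are the
`W`- and `H`-components of `∇f(W, H, b) = 0`. -/
theorem stmt15_general {K N d : ℕ} (hd : K < d)
    (lW lH lb : ℝ) (hlW : 0 < lW) (hlH : 0 < lH)
    (W : Matrix (Fin K) (Fin d) ℝ) (H : Matrix (Fin d) (Fin N) ℝ)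
    (G : Matrix (Fin K) (Fin N) ℝ)
    (B : Matrix (Fin K) (Fin N) ℝ →ₗ[ℝ] Matrix (Fin K) (Fin N) ℝ →ₗ[ℝ] ℝ)
    (hcrit1 : G * Hᵀ + lW • W = 0)
    (hcrit2 : Wᵀ * G + lH • H = 0)
    (hop : Real.sqrt (lW * lH) < matOpNorm G) :
    ∃ (ΔW : Matrix (Fin K) (Fin d) ℝ) (ΔH : Matrix (Fin d) (Fin N) ℝ),
      B (W * ΔH + ΔW * H + Matrix.of fun _ _ => (0 : ℝ))
          (W * ΔH + ΔW * H + Matrix.of fun _ _ => (0 : ℝ)) +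
        2 * (∑ i, ∑ j, G i j * (ΔW * ΔH) i j) +
        lW * frobSq ΔW + lH * frobSq ΔH + lb * ∑ i : Fin K, (0 : ℝ) ^ 2 < 0 := by
  obtain ⟨a, ha, hWa⟩ := W.exists_ne_zero_mulVec_eq_zero_of_card_lt (by simpa using hd)
  have haH : a ᵥ* H = 0 := vecMul_eq_zero_of_smul_mul_transpose_eq hlH.ne'
    (smul_mul_transpose_eq_smul_transpose_mul hcrit1 hcrit2) hWa
  obtain ⟨v, hv⟩ := exists_sq_mul_dotProduct_lt_of_lt_matOpNorm G (Real.sqrt_nonneg _) hop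
  rw [Real.sq_sqrt (by positivity)] at hv
  have ha2 : 0 < a ⬝ᵥ a := by simpa using dotProduct_self_star_pos_iff.2 ha
  refine ⟨vecMulVec (G *ᵥ v) a, vecMulVec a (-lW • v), ?_⟩
  have hfirst : W * vecMulVec a (-lW • v) + vecMulVec (G *ᵥ v) a * H
      + of (fun _ _ => (0 : ℝ)) = 0 := by
    rw [mul_vecMulVec, vecMulVec_mul, hWa, haH]
    ext
    simp [vecMulVec_apply]
  rw [hfirst, vecMulVec_mul_vecMulVec, sum_sum_mul_vecMulVec, frobSq_vecMulVec,
    frobSq_vecMulVec]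
  calc _ = lW * (a ⬝ᵥ a) * (lW * lH * (v ⬝ᵥ v) - G *ᵥ v ⬝ᵥ G *ᵥ v) := by
        simp only [map_zero, mulVec_smul, dotProduct_smul, smul_dotProduct,
          smul_eq_mul, zero_pow two_ne_zero, Finset.sum_const_zero]
        ring
    _ < 0 := mul_neg_of_pos_of_neg (by positivity) (by linarith)

/-- Strict saddle: let `g` be twice differentiable, `d > K`, and
`f(W,H,b) = g(WH + b1ᵀ) + (λ_W/2)‖W‖_F² + (λ_H/2)‖H‖_F² + (λ_b/2)‖b‖₂²`.
Here `G = ∇g(WH + b1ᵀ)` and `B = ∇²g(WH + b1ᵀ)` (as a bilinear form); the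
critical-point equations of `f` are `G·Hᵀ + λ_W W = 0`, `Wᵀ·G + λ_H H = 0`,
`∑ⱼ Gⱼ + λ_b b = 0`. If the operator norm of `G` exceeds `√(λ_W λ_H)`, then there
is a direction `Δ = (Δ_W, Δ_H, 0)` along which the Hessian quadratic form of `f`,
`∇²g[WΔ_H + Δ_W H + Δ_b 1ᵀ, ·] + 2⟨G, Δ_W Δ_H⟩ + λ_W‖Δ_W‖_F² + λ_H‖Δ_H‖_F²
+ λ_b‖Δ_b‖₂²`, is strictly negative. -/
theorem stmt15 {K N d : ℕ} (hd : K < d)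
    (g : Matrix (Fin K) (Fin N) ℝ → ℝ) (hg : ContDiff ℝ 2 g)
    (lW lH lb : ℝ) (hlW : 0 < lW) (hlH : 0 < lH) (hlb : 0 < lb)
    (W : Matrix (Fin K) (Fin d) ℝ) (H : Matrix (Fin d) (Fin N) ℝ) (b : Fin K → ℝ)
    (G : Matrix (Fin K) (Fin N) ℝ)
    (hG : ∀ i j, G i j =
      fderiv ℝ g (W * H + Matrix.of fun i' _ => b i') (Matrix.single i j 1))
    (B : Matrix (Fin K) (Fin N) ℝ →ₗ[ℝ] Matrix (Fin K) (Fin N) ℝ →ₗ[ℝ] ℝ)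
    (hB : ∀ A C : Matrix (Fin K) (Fin N) ℝ,
      B A C = iteratedFDeriv ℝ 2 g (W * H + Matrix.of fun i' _ => b i') ![A, C])
    (hcrit1 : G * Hᵀ + lW • W = 0)
    (hcrit2 : Wᵀ * G + lH • H = 0)
    (hcrit3 : ∀ k, (∑ j, G k j) + lb * b k = 0)
    (hop : Real.sqrt (lW * lH) < matOpNorm G) :
    ∃ (ΔW : Matrix (Fin K) (Fin d) ℝ) (ΔH : Matrix (Fin d) (Fin N) ℝ),
      B (W * ΔH + ΔW * H + Matrix.of fun _ _ => (0 : ℝ))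
          (W * ΔH + ΔW * H + Matrix.of fun _ _ => (0 : ℝ)) +
        2 * (∑ i, ∑ j, G i j * (ΔW * ΔH) i j) +
        lW * frobSq ΔW + lH * frobSq ΔH + lb * ∑ i : Fin K, (0 : ℝ) ^ 2 < 0 :=
  stmt15_general hd lW lH lb hlW hlH W H G B hcrit1 hcrit2 hop
end
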